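/- arXiv:2603.27845 — 3 statements merged into one kernel-verified Lean document; each statement's English description precedes it below -/
import Mathlib

section
/- Consider the Watts–Strogatz mean-field system with inertia δ = 0. Suppose the Case-1 condition p·(α+β)·max{r, 1−r} < α holds, and let c be a real number with 1/2 < c ≤ 1. Then every solution θ = (θ^B, θ^R) of the system on [0, ∞) with θ^B(0) = θ^R(0) = c satisfies θ(t) → (1, 1) as t → ∞ (consensus on the initially more popular choice). -/
open Set Filter

/-- `g^B(θ) = α(1−pr)(2θ^B−1) − βpr(2θ^R−1)`. -/
noncomputable def gB (α β p r θB θR : ℝ) : ℝ :=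
  α * (1 - p * r) * (2 * θB - 1) - β * p * r * (2 * θR - 1)

/-- `g^R(θ) = α(1−p(1−r))(2θ^R−1) − β(1−r)p(2θ^B−1)`. -/
noncomputable def gR (α β p r θB θR : ℝ) : ℝ :=
  α * (1 - p * (1 - r)) * (2 * θR - 1) - β * (1 - r) * p * (2 * θB - 1)

/-- Right-hand side of the blue equation:
`(1−θ^B)·𝟙[g^B(θ) > 0] − θ^B·𝟙[g^B(θ) < 0]`. -/
noncomputable def rhsB (α β p r θB θR : ℝ) : ℝ :=
  (1 - θB) * (if 0 < gB α β p r θB θR then 1 else 0)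
    - θB * (if gB α β p r θB θR < 0 then 1 else 0)

/-- Right-hand side of the red equation:
`(1−θ^R)·𝟙[g^R(θ) > 0] − θ^R·𝟙[g^R(θ) < 0]`. -/
noncomputable def rhsR (α β p r θB θR : ℝ) : ℝ :=
  (1 - θR) * (if 0 < gR α β p r θB θR then 1 else 0)
    - θR * (if gR α β p r θB θR < 0 then 1 else 0)

/-- `θ = (θ^B, θ^R)` is a solution of the Watts–Strogatz mean-field system
(with inertia `δ = 0`) on the set `J`: it is differentiable on `J` and satisfies
the two differential equations at every `t ∈ J`. -/
def IsWSSolutionOn (α β p r : ℝ) (θB θR : ℝ → ℝ) (J : Set ℝ) : Prop :=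
  ∀ t ∈ J,
    HasDerivWithinAt θB (rhsB α β p r (θB t) (θR t)) J t ∧
    HasDerivWithinAt θR (rhsR α β p r (θB t) (θR t)) J t

/-! On the diagonal `θ^B = θ^R = x` both drivers factor as `(2x − 1)` times
`α − p(α+β)r`, resp. `α − p(α+β)(1−r)`, and the Case-1 condition makes both coefficients
positive. So as long as the solution is on the diagonal above `1/2`, both components obey
the linear equation `y' = 1 − y`, whose solution `1 − (1 − c)e^{−t}` stays above `1/2`
and tends to `1`. Since the right-hand side is discontinuous, general ODE
uniqueness does not apply directly; instead, continuity of `g^B, g^R` keeps them positive on a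
short interval after any diagonal time, where Lipschitz uniqueness for `y' = 1 − y` applies,
and continuous induction propagates the identification to all `t ≥ 0`. -/

open Topology

noncomputable def consensusCurve (c t : ℝ) : ℝ :=
  1 - (1 - c) * Real.exp (-t)

theorem hasDerivAt_consensusCurve (c t : ℝ) :
    HasDerivAt (consensusCurve c) (1 - consensusCurve c t) t := by
  refine ((((hasDerivAt_neg t).exp).const_mul (1 - c)).const_sub 1).congr_deriv ?_
  simp only [consensusCurve]
  ring

theorem consensusCurve_zero (c : ℝ) : consensusCurve c 0 = c := by
  simp [consensusCurve]

theorem half_lt_consensusCurve {c t : ℝ} (hc : 1 / 2 < c) (ht : 0 ≤ t) :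
    1 / 2 < consensusCurve c t := by
  have he₀ : 0 < Real.exp (-t) := Real.exp_pos _
  have he₁ : Real.exp (-t) ≤ 1 := Real.exp_le_one_iff.mpr (neg_nonpos.mpr ht)
  unfold consensusCurve
  rcases le_total c 1 with h | h <;> nlinarith

theorem tendsto_consensusCurve (c : ℝ) : Tendsto (consensusCurve c) atTop (nhds 1) := by
  unfold consensusCurve
  simpa using
    (Real.tendsto_exp_neg_atTop_nhds_zero.const_mul (1 - c)).const_sub (1 : ℝ)

theorem eqOn_Icc_of_hasDerivWithinAt_one_sub {f g : ℝ → ℝ} {a b : ℝ}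
    (hf : ContinuousOn f (Icc a b)) (hf' : ∀ t ∈ Ico a b, HasDerivWithinAt f (1 - f t) (Ici t) t)
    (hg : ContinuousOn g (Icc a b)) (hg' : ∀ t ∈ Ico a b, HasDerivWithinAt g (1 - g t) (Ici t) t)
    (ha : f a = g a) : EqOn f g (Icc a b) :=
  have hv : LipschitzWith 1 (fun x : ℝ => 1 - x) := by
    simpa using (LipschitzWith.const (1 : ℝ)).sub LipschitzWith.id
  ODE_solution_unique (v := fun _ x => 1 - x) (fun _ => hv) hf hf' hg hg' ha

section Diagonal

variable {α β p r x : ℝ}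

theorem gB_self : gB α β p r x x = (2 * x - 1) * (α - p * (α + β) * r) := by
  unfold gB; ring

theorem gR_self : gR α β p r x x = (2 * x - 1) * (α - p * (α + β) * (1 - r)) := by
  unfold gR; ring

theorem gB_self_pos (hpab : 0 ≤ p * (α + β)) (hcase : p * (α + β) * max r (1 - r) < α)
    (hx : 1 / 2 < x) : 0 < gB α β p r x x := by
  have := mul_le_mul_of_nonneg_left (le_max_left r (1 - r)) hpab
  rw [gB_self]
  exact mul_pos (by linarith) (by linarith)

theorem gR_self_pos (hpab : 0 ≤ p * (α + β)) (hcase : p * (α + β) * max r (1 - r) < α)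
    (hx : 1 / 2 < x) : 0 < gR α β p r x x := by
  have := mul_le_mul_of_nonneg_left (le_max_right r (1 - r)) hpab
  rw [gR_self]
  exact mul_pos (by linarith) (by linarith)

end Diagonal

theorem rhsB_of_pos {α β p r θB θR : ℝ} (h : 0 < gB α β p r θB θR) :
    rhsB α β p r θB θR = 1 - θB := by
  simp [rhsB, h, h.not_gt]

theorem rhsR_of_pos {α β p r θB θR : ℝ} (h : 0 < gR α β p r θB θR) :
    rhsR α β p r θB θR = 1 - θR := by
  simp [rhsR, h, h.not_gt]

namespace IsWSSolutionOn

variable {α β p r : ℝ} {θB θR : ℝ → ℝ} {J : Set ℝ}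

theorem continuousOn_B (hsol : IsWSSolutionOn α β p r θB θR J) : ContinuousOn θB J :=
  fun t ht => (hsol t ht).1.continuousWithinAt

theorem continuousOn_R (hsol : IsWSSolutionOn α β p r θB θR J) : ContinuousOn θR J :=
  fun t ht => (hsol t ht).2.continuousWithinAt

theorem eventually_eq_of_diag (hsol : IsWSSolutionOn α β p r θB θR (Ici 0))
    (hpab : 0 ≤ p * (α + β)) (hcase : p * (α + β) * max r (1 - r) < α)
    {ψ : ℝ → ℝ} (hψ : ∀ t, HasDerivAt ψ (1 - ψ t) t) {t₀ : ℝ} (ht₀ : 0 ≤ t₀)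
    (hψt₀ : 1 / 2 < ψ t₀) (hB : θB t₀ = ψ t₀) (hR : θR t₀ = ψ t₀) :
    ∀ᶠ t in 𝓝[>] t₀, θB t = ψ t ∧ θR t = ψ t := by
  have hB_cont := hsol.continuousOn_B t₀ ht₀
  have hR_cont := hsol.continuousOn_R t₀ ht₀
  have hgB : ContinuousWithinAt (fun t => gB α β p r (θB t) (θR t)) (Ici 0) t₀ := by
    unfold gB; fun_prop
  have hgR : ContinuousWithinAt (fun t => gR α β p r (θB t) (θR t)) (Ici 0) t₀ := by
    unfold gR; fun_prop
  have hpos : ∀ᶠ t in 𝓝[≥] t₀,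
      0 < gB α β p r (θB t) (θR t) ∧ 0 < gR α β p r (θB t) (θR t) := by
    refine nhdsWithin_mono _ (Ici_subset_Ici.mpr ht₀) ?_
    refine (hgB.eventually (lt_mem_nhds ?_)).and (hgR.eventually (lt_mem_nhds ?_))
    · simpa only [hB, hR] using gB_self_pos hpab hcase hψt₀
    · simpa only [hB, hR] using gR_self_pos hpab hcase hψt₀
  obtain ⟨u, hu, hIco⟩ := mem_nhdsGE_iff_exists_Ico_subset.mp hpos
  have hIcc : Icc t₀ u ⊆ Ici 0 := fun t ht => ht₀.trans ht.1
  have hψ_cont : ContinuousOn ψ (Icc t₀ u) := fun t _ => (hψ t).continuousAt.continuousWithinAt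
  have hψ' : ∀ t ∈ Ico t₀ u, HasDerivWithinAt ψ (1 - ψ t) (Ici t) t :=
    fun t _ => (hψ t).hasDerivWithinAt
  have hmono : ∀ t ∈ Ico t₀ u, Ici t ⊆ Ici 0 := fun t ht => Ici_subset_Ici.mpr (ht₀.trans ht.1)
  have hB_eq : EqOn θB ψ (Icc t₀ u) := by
    refine eqOn_Icc_of_hasDerivWithinAt_one_sub (hsol.continuousOn_B.mono hIcc) (fun t ht => ?_)
      hψ_cont hψ' hB
    have hd := (hsol t (hIcc (Ico_subset_Icc_self ht))).1
    rw [rhsB_of_pos (hIco ht).1] at hd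
    exact hd.mono (hmono t ht)
  have hR_eq : EqOn θR ψ (Icc t₀ u) := by
    refine eqOn_Icc_of_hasDerivWithinAt_one_sub (hsol.continuousOn_R.mono hIcc) (fun t ht => ?_)
      hψ_cont hψ' hR
    have hd := (hsol t (hIcc (Ico_subset_Icc_self ht))).2
    rw [rhsR_of_pos (hIco ht).2] at hd
    exact hd.mono (hmono t ht)
  filter_upwards [Ioo_mem_nhdsGT hu] with t ht
  exact ⟨hB_eq (Ioo_subset_Icc_self ht), hR_eq (Ioo_subset_Icc_self ht)⟩

theorem eq_consensusCurve (hsol : IsWSSolutionOn α β p r θB θR (Ici 0))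
    (hpab : 0 ≤ p * (α + β)) (hcase : p * (α + β) * max r (1 - r) < α)
    {c : ℝ} (hc : 1 / 2 < c) (h0B : θB 0 = c) (h0R : θR 0 = c) {t : ℝ} (ht : 0 ≤ t) :
    θB t = consensusCurve c t ∧ θR t = consensusCurve c t := by
  set S := {s | θB s = consensusCurve c s ∧ θR s = consensusCurve c s}
  have hS : S ∩ Icc 0 t =
      {s ∈ Icc 0 t | (θB s, θR s) = (consensusCurve c s, consensusCurve c s)} := by
    ext s
    simp only [S, mem_inter_iff, mem_ofPred_eq, Prod.ext_iff]
    tauto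
  have hclosed : IsClosed (S ∩ Icc 0 t) := by
    have hIcc : Icc 0 t ⊆ Ici 0 := Icc_subset_Ici_self
    have hψ : Continuous (consensusCurve c) := by unfold consensusCurve; fun_prop
    rw [hS]
    exact isClosed_Icc.isClosed_eq
      ((hsol.continuousOn_B.mono hIcc).prodMk (hsol.continuousOn_R.mono hIcc))
      (hψ.prodMk hψ).continuousOn
  have h0 : (0 : ℝ) ∈ S := by
    change θB 0 = consensusCurve c 0 ∧ θR 0 = consensusCurve c 0
    rw [consensusCurve_zero]
    exact ⟨h0B, h0R⟩
  refine hclosed.Icc_subset_of_forall_mem_nhdsWithin h0 (fun s hs => ?_) ⟨ht, le_rfl⟩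
  exact hsol.eventually_eq_of_diag hpab hcase (hasDerivAt_consensusCurve c) hs.2.1
    (half_lt_consensusCurve hc hs.2.1) hs.1.1 hs.1.2

end IsWSSolutionOn

theorem ws_case1_consensus_to_one_general
    (α β p r : ℝ)
    (hα : α ∈ Set.Icc (0:ℝ) 1) (hβ : β ∈ Set.Icc (0:ℝ) 1)
    (hp : p ∈ Set.Icc (0:ℝ) 1)
    (hcase : p * (α + β) * max r (1 - r) < α)
    (c : ℝ) (hc1 : 1 / 2 < c)
    (θB θR : ℝ → ℝ)
    (hsol : IsWSSolutionOn α β p r θB θR (Set.Ici 0))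
    (h0B : θB 0 = c) (h0R : θR 0 = c) :
    Filter.Tendsto (fun t => (θB t, θR t)) Filter.atTop (nhds ((1:ℝ), (1:ℝ))) := by
  have hpab : 0 ≤ p * (α + β) := mul_nonneg hp.1 (add_nonneg hα.1 hβ.1)
  refine ((tendsto_consensusCurve c).prodMk_nhds (tendsto_consensusCurve c)).congr' ?_
  filter_upwards [eventually_ge_atTop 0] with t ht
  obtain ⟨hBt, hRt⟩ := hsol.eq_consensusCurve hpab hcase hc1 h0B h0R ht
  rw [hBt, hRt]

/-- Under the Case-1 condition `p(α+β)max{r,1−r} < α` and party-independent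
initial condition `θ^B(0) = θ^R(0) = c` with `1/2 < c ≤ 1`, every solution of the
Watts–Strogatz mean-field system on `[0,∞)` converges to the consensus state `(1,1)`. -/
theorem ws_case1_consensus_to_one
    (α β p r : ℝ)
    (hα : α ∈ Set.Icc (0:ℝ) 1) (hβ : β ∈ Set.Icc (0:ℝ) 1)
    (hp : p ∈ Set.Icc (0:ℝ) 1) (hr : r ∈ Set.Ioo (0:ℝ) 1)
    (hcase : p * (α + β) * max r (1 - r) < α)
    (c : ℝ) (hc1 : 1 / 2 < c) (hc2 : c ≤ 1)
    (θB θR : ℝ → ℝ)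
    (hsol : IsWSSolutionOn α β p r θB θR (Set.Ici 0))
    (h0B : θB 0 = c) (h0R : θR 0 = c) :
    Filter.Tendsto (fun t => (θB t, θR t)) Filter.atTop (nhds ((1:ℝ), (1:ℝ))) :=
  ws_case1_consensus_to_one_general α β p r hα hβ hp hcase c hc1 θB θR hsol h0B h0R
end

section
/- Consider the Watts–Strogatz mean-field system with inertia δ = 0. Suppose the Case-1 condition p·(α+β)·max{r, 1−r} < α holds, and let c be a real number with 0 ≤ c < 1/2. Then every solution θ = (θ^B, θ^R) of the system on [0, ∞) with θ^B(0) = θ^R(0) = c satisfies θ(t) → (0, 0) as t → ∞ (consensus on the initially more popular choice). -/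
open Set Filter

/-!
Starting on the diagonal below `1/2`, the Case-1 condition makes both `g^B` and `g^R` negative,
so both opinions follow `θ' = -θ` and the solution moves along the diagonal as `c e^{-t}`.
Since the diagonal stays below `1/2`, this persists for all time (continuous induction on the set
of times where `θ(t) = c e^{-t}(1, 1)`), and `c e^{-t} → 0`.
-/

open Real Set Filter Topology

lemma gB_self_neg {α β p r v : ℝ} (h : p * (α + β) * r < α) (hv : v < 1 / 2) :
    gB α β p r v v < 0 := by
  have : gB α β p r v v = (α - p * (α + β) * r) * (2 * v - 1) := by unfold gB; ring
  rw [this]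
  exact mul_neg_of_pos_of_neg (by linarith) (by linarith)

lemma gR_self_neg {α β p r v : ℝ} (h : p * (α + β) * (1 - r) < α) (hv : v < 1 / 2) :
    gR α β p r v v < 0 := by
  have : gR α β p r v v = (α - p * (α + β) * (1 - r)) * (2 * v - 1) := by unfold gR; ring
  rw [this]
  exact mul_neg_of_pos_of_neg (by linarith) (by linarith)

lemma rhsB_of_gB_neg {α β p r θB θR : ℝ} (h : gB α β p r θB θR < 0) :
    rhsB α β p r θB θR = -θB := by
  simp [rhsB, h, h.not_gt]

lemma rhsR_of_gR_neg {α β p r θB θR : ℝ} (h : gR α β p r θB θR < 0) :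
    rhsR α β p r θB θR = -θR := by
  simp [rhsR, h, h.not_gt]

lemma eq_exp_smul_of_hasDerivWithinAt_neg {E : Type*} [NormedAddCommGroup E] [NormedSpace ℝ E]
    {f : ℝ → E} {a b : ℝ} (hf : ContinuousOn f (Icc a b))
    (hd : ∀ s ∈ Ico a b, HasDerivWithinAt f (-f s) (Ici s) s) :
    ∀ s ∈ Icc a b, f s = exp (a - s) • f a := by
  have hconst := constant_of_has_deriv_right_zero (f := fun s => exp s • f s)
    ((continuous_exp.continuousOn).smul hf) fun s hs => by
      have := (hasDerivAt_exp s).hasDerivWithinAt.smul (hd s hs)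
      rwa [smul_neg, neg_add_cancel] at this
  intro s hs
  rw [sub_eq_neg_add, exp_add, mul_smul, ← hconst s hs, smul_smul, ← exp_add, neg_add_cancel,
    exp_zero, one_smul]

namespace IsWSSolutionOn

variable {α β p r : ℝ} {θB θR : ℝ → ℝ}

lemma exists_Icc_eq_exp_smul (hsol : IsWSSolutionOn α β p r θB θR (Ici 0)) {x : ℝ} (hx : 0 ≤ x)
    (hB : gB α β p r (θB x) (θR x) < 0) (hR : gR α β p r (θB x) (θR x) < 0) :
    ∃ b > x, ∀ s ∈ Icc x b, (θB s, θR s) = exp (x - s) • (θB x, θR x) := by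
  have hθ : ContinuousOn (fun t => (θB t, θR t)) (Ici 0) := fun t ht =>
    ((hsol t ht).1.prodMk (hsol t ht).2).continuousWithinAt
  have hneg : ∀ᶠ s in 𝓝[≥] x, gB α β p r (θB s) (θR s) < 0 ∧ gR α β p r (θB s) (θR s) < 0 := by
    have hθB : ContinuousWithinAt θB (Ici 0) x := (hsol x hx).1.continuousWithinAt
    have hθR : ContinuousWithinAt θR (Ici 0) x := (hsol x hx).2.continuousWithinAt
    have hgB : ContinuousWithinAt (fun t => gB α β p r (θB t) (θR t)) (Ici 0) x := by
      unfold gB; fun_prop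
    have hgR : ContinuousWithinAt (fun t => gR α β p r (θB t) (θR t)) (Ici 0) x := by
      unfold gR; fun_prop
    exact nhdsWithin_mono x (Ici_subset_Ici.2 hx)
      ((hgB.eventually (gt_mem_nhds hB)).and (hgR.eventually (gt_mem_nhds hR)))
  obtain ⟨b, hxb, hsub⟩ := mem_nhdsGE_iff_exists_Icc_subset.1 hneg
  refine ⟨b, hxb, eq_exp_smul_of_hasDerivWithinAt_neg (hθ.mono fun s hs => hx.trans hs.1)
    fun s hs => ?_⟩
  have hs0 : 0 ≤ s := hx.trans hs.1
  obtain ⟨hBs, hRs⟩ := hsub (Ico_subset_Icc_self hs)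
  have := ((hsol s hs0).1.prodMk (hsol s hs0).2).mono (Ici_subset_Ici.2 hs0)
  rwa [rhsB_of_gB_neg hBs, rhsR_of_gR_neg hRs] at this

lemma eq_exp_neg_smul (hsol : IsWSSolutionOn α β p r θB θR (Ici 0))
    (hB : p * (α + β) * r < α) (hR : p * (α + β) * (1 - r) < α) {c : ℝ} (hc : c < 1 / 2)
    (h0B : θB 0 = c) (h0R : θR 0 = c) {T : ℝ} (hT : 0 ≤ T) :
    (θB T, θR T) = exp (-T) • (c, c) := by
  set S := {t | (θB t, θR t) = exp (-t) • (c, c)}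
  suffices Icc 0 T ⊆ S from this ⟨hT, le_rfl⟩
  have hθ : ContinuousOn (fun t => (θB t, θR t)) (Icc 0 T) := fun t ht =>
    ((hsol t ht.1).1.prodMk (hsol t ht.1).2).continuousWithinAt.mono Icc_subset_Ici_self
  refine IsClosed.Icc_subset_of_forall_mem_nhdsWithin ?_ ?_ ?_
  · rw [inter_comm]
    exact (hθ.prodMk (by fun_prop)).preimage_isClosed_of_isClosed isClosed_Icc isClosed_diagonal
  · simp [S, h0B, h0R]
  · rintro x ⟨hxS, hx0, -⟩
    have hxB : θB x = exp (-x) * c := congrArg Prod.fst hxS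
    have hxR : θR x = exp (-x) * c := congrArg Prod.snd hxS
    have hv : exp (-x) * c < 1 / 2 := by
      nlinarith [exp_pos (-x), exp_le_one_iff.2 (neg_nonpos.2 hx0)]
    obtain ⟨b, hxb, hb⟩ := hsol.exists_Icc_eq_exp_smul hx0
      (by rw [hxB, hxR]; exact gB_self_neg hB hv) (by rw [hxB, hxR]; exact gR_self_neg hR hv)
    refine mem_of_superset (Ioo_mem_nhdsGT hxb) fun s hs => ?_
    change (θB s, θR s) = exp (-s) • (c, c)
    rw [hb s (Ioo_subset_Icc_self hs), hxS, smul_smul, ← exp_add]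
    ring_nf

end IsWSSolutionOn

theorem ws_case1_consensus_to_zero_general
    (α β p r : ℝ)
    (hα : α ∈ Set.Icc (0:ℝ) 1) (hβ : β ∈ Set.Icc (0:ℝ) 1)
    (hp : p ∈ Set.Icc (0:ℝ) 1)
    (hcase : p * (α + β) * max r (1 - r) < α)
    (c : ℝ) (hc2 : c < 1 / 2)
    (θB θR : ℝ → ℝ)
    (hsol : IsWSSolutionOn α β p r θB θR (Set.Ici 0))
    (h0B : θB 0 = c) (h0R : θR 0 = c) :
    Filter.Tendsto (fun t => (θB t, θR t)) Filter.atTop (nhds (((0:ℝ), (0:ℝ)))) := by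
  have hK : 0 ≤ p * (α + β) := mul_nonneg hp.1 (add_nonneg hα.1 hβ.1)
  have hB := (mul_le_mul_of_nonneg_left (le_max_left r (1 - r)) hK).trans_lt hcase
  have hR := (mul_le_mul_of_nonneg_left (le_max_right r (1 - r)) hK).trans_lt hcase
  have hlim : Tendsto (fun t => exp (-t) • (c, c)) atTop (𝓝 ((0 : ℝ), (0 : ℝ))) := by
    simpa only [zero_smul, Prod.mk_zero_zero] using
      tendsto_exp_neg_atTop_nhds_zero.smul_const (c, c)
  refine hlim.congr' ?_
  filter_upwards [eventually_ge_atTop 0] with t ht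
  exact (hsol.eq_exp_neg_smul hB hR hc2 h0B h0R ht).symm

/-- Under the Case-1 condition and initial condition θ^B(0)=θ^R(0)=c with 0 ≤ c < 1/2, every solution on [0,∞) converges to the consensus state (0,0). -/
theorem ws_case1_consensus_to_zero
    (α β p r : ℝ)
    (hα : α ∈ Set.Icc (0:ℝ) 1) (hβ : β ∈ Set.Icc (0:ℝ) 1)
    (hp : p ∈ Set.Icc (0:ℝ) 1) (hr : r ∈ Set.Ioo (0:ℝ) 1)
    (hcase : p * (α + β) * max r (1 - r) < α)
    (c : ℝ) (hc1 : 0 ≤ c) (hc2 : c < 1 / 2)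
    (θB θR : ℝ → ℝ)
    (hsol : IsWSSolutionOn α β p r θB θR (Set.Ici 0))
    (h0B : θB 0 = c) (h0R : θR 0 = c) :
    Filter.Tendsto (fun t => (θB t, θR t)) Filter.atTop (nhds (((0:ℝ), (0:ℝ)))) :=
  ws_case1_consensus_to_zero_general α β p r hα hβ hp hcase c hc2 θB θR hsol h0B h0R
end

section
/- Consider the Watts–Strogatz mean-field system with inertia δ = 0. Suppose the Case-2 condition holds: p·(α+β)·r > α and p·(α+β)·(1−r) < α. Let c be a real number with 0 ≤ c < 1/2. Then every solution θ = (θ^B, θ^R) of the system on [0, ∞) with θ^B(0) = θ^R(0) = c satisfies θ(t) → (1, 0) as t → ∞ (party-line polarization, with the red group fully adopting the initially more popular choice and the blue group adopting the other choice). -/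
open Set Filter

/-!
Along the explicit path `θ^B = 1 − (1 − c)e^{−t}`, `θ^R = c e^{−t}` one has `θ^R ≤ θ^B` and
`θ^R < 1/2`, and under the Case-2 condition these force `g^B > 0` and `g^R < 0`. Wherever a
solution sits on this path, the strict signs persist for a short time by continuity; there the
system is the pair of linear equations `θ^B' = 1 − θ^B`, `θ^R' = −θ^R`, whose solutions are unique,
so the solution stays on the path. Real induction extends this to all `t ≥ 0`.
-/

open Topology

noncomputable def relaxation (L c t : ℝ) : ℝ := L + (c - L) * Real.exp (-t)

section Relaxation

variable (L c : ℝ)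

@[simp]
lemma relaxation_zero : relaxation L c 0 = c := by
  simp [relaxation]

lemma hasDerivAt_relaxation (t : ℝ) : HasDerivAt (relaxation L c) (L - relaxation L c t) t := by
  have h := ((Real.hasDerivAt_exp (-t)).comp t (hasDerivAt_neg t)).const_mul (c - L) |>.const_add L
  exact h.congr_deriv (by simp only [relaxation]; ring)

lemma continuous_relaxation : Continuous (relaxation L c) :=
  continuous_iff_continuousAt.2 fun t => (hasDerivAt_relaxation L c t).continuousAt

lemma tendsto_relaxation : Tendsto (relaxation L c) atTop (𝓝 L) := by
  have h := (Real.tendsto_exp_neg_atTop_nhds_zero.const_mul (c - L)).const_add L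
  rwa [mul_zero, add_zero] at h

lemma relaxation_zero_le_relaxation_one {t : ℝ} (ht : 0 ≤ t) :
    relaxation 0 c t ≤ relaxation 1 c t := by
  have : Real.exp (-t) ≤ 1 := Real.exp_le_one_iff.2 (neg_nonpos.2 ht)
  simp only [relaxation]
  linarith

lemma relaxation_zero_lt_half {t : ℝ} (hc : c < 1 / 2) (ht : 0 ≤ t) : relaxation 0 c t < 1 / 2 := by
  have h1 : Real.exp (-t) ≤ 1 := Real.exp_le_one_iff.2 (neg_nonpos.2 ht)
  have h0 : 0 < Real.exp (-t) := Real.exp_pos _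
  simp only [relaxation]
  nlinarith

variable {L c}

lemma lipschitzWith_const_sub : LipschitzWith 1 (fun x : ℝ => L - x) :=
  LipschitzWith.of_dist_le_mul fun x y => by
    rw [Real.dist_eq, Real.dist_eq, sub_sub_sub_cancel_left, abs_sub_comm, NNReal.coe_one, one_mul]

lemma eqOn_relaxation {f : ℝ → ℝ} {a b : ℝ} (hf : ContinuousOn f (Icc a b))
    (hf' : ∀ t ∈ Ico a b, HasDerivWithinAt f (L - f t) (Ici t) t) (ha : f a = relaxation L c a) :
    EqOn f (relaxation L c) (Icc a b) :=
  ODE_solution_unique (v := fun _ x => L - x) (fun _ => lipschitzWith_const_sub) hf hf'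
    (continuous_relaxation L c).continuousOn
    (fun t _ => (hasDerivAt_relaxation L c t).hasDerivWithinAt) ha

end Relaxation

section Signs

variable {α β p r x y : ℝ}

lemma gB_pos_of_le_of_lt_half (hα : 0 ≤ α) (hpr : p * r ≤ 1) (hcase : α < p * (α + β) * r)
    (hyx : y ≤ x) (hy : y < 1 / 2) : 0 < gB α β p r x y := by
  have hβpr : α * (1 - p * r) < β * p * r := by linarith
  have hα' : 0 ≤ α * (1 - p * r) := mul_nonneg hα (by linarith)
  unfold gB
  -- for `x ≥ 1/2` both terms are positive; otherwise `y ≤ x` bounds `g^B` below by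
  -- `(1 - 2x)(p(α + β)r - α)`
  rcases le_or_gt (1 / 2) x with hx | hx
  · nlinarith
  · nlinarith

lemma gR_neg_of_le_of_lt_half (hβ : 0 ≤ β) (hp : 0 ≤ p) (hr : r ≤ 1)
    (hcase : p * (α + β) * (1 - r) < α) (hyx : y ≤ x) (hy : y < 1 / 2) :
    gR α β p r x y < 0 := by
  have hβrp : 0 ≤ β * (1 - r) * p := mul_nonneg (mul_nonneg hβ (by linarith)) hp
  unfold gR
  -- `y ≤ x` bounds `g^R` above by `(2y - 1)(α - p(α + β)(1 - r))`
  nlinarith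

lemma continuous_gB : Continuous (fun q : ℝ × ℝ => gB α β p r q.1 q.2) := by
  unfold gB
  fun_prop

lemma continuous_gR : Continuous (fun q : ℝ × ℝ => gR α β p r q.1 q.2) := by
  unfold gR
  fun_prop

end Signs

section Solution

variable {α β p r : ℝ} {θB θR : ℝ → ℝ}

lemma rhsB_eq_of_gB_pos {x y : ℝ} (h : 0 < gB α β p r x y) : rhsB α β p r x y = 1 - x := by
  rw [rhsB, if_pos h, if_neg (not_lt.2 h.le)]
  ring

lemma rhsR_eq_of_gR_neg {x y : ℝ} (h : gR α β p r x y < 0) : rhsR α β p r x y = 0 - y := by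
  rw [rhsR, if_neg (not_lt.2 h.le), if_pos h]
  ring

namespace IsWSSolutionOn

lemma continuousOn_blue {J : Set ℝ} (hsol : IsWSSolutionOn α β p r θB θR J) :
    ContinuousOn θB J :=
  fun t ht => (hsol t ht).1.continuousWithinAt

lemma continuousOn_red {J : Set ℝ} (hsol : IsWSSolutionOn α β p r θB θR J) :
    ContinuousOn θR J :=
  fun t ht => (hsol t ht).2.continuousWithinAt

lemma eventually_eq_relaxation (hsol : IsWSSolutionOn α β p r θB θR (Ici 0)) {x cB cR : ℝ}
    (hx : 0 ≤ x) (hgB : 0 < gB α β p r (θB x) (θR x)) (hgR : gR α β p r (θB x) (θR x) < 0)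
    (hBx : θB x = relaxation 1 cB x) (hRx : θR x = relaxation 0 cR x) :
    ∀ᶠ t in 𝓝[>] x, (θB t, θR t) = (relaxation 1 cB t, relaxation 0 cR t) := by
  have hθ : ContinuousWithinAt (fun s => (θB s, θR s)) (Ici 0) x :=
    (hsol.continuousOn_blue x hx).prodMk (hsol.continuousOn_red x hx)
  have hsigns : ∀ᶠ t in 𝓝[≥] x,
      0 < gB α β p r (θB t) (θR t) ∧ gR α β p r (θB t) (θR t) < 0 :=
    nhdsWithin_mono _ (Ici_subset_Ici.2 hx)
      (((continuous_gB.continuousAt.comp_continuousWithinAt hθ).eventually (lt_mem_nhds hgB)).and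
        ((continuous_gR.continuousAt.comp_continuousWithinAt hθ).eventually (gt_mem_nhds hgR)))
  obtain ⟨u, hxu, hu⟩ := mem_nhdsGE_iff_exists_Ico_subset.1 hsigns
  have hIcc : Icc x u ⊆ Ici 0 := fun t ht => hx.trans ht.1
  have ht0 {t : ℝ} (ht : t ∈ Ico x u) : 0 ≤ t := hx.trans ht.1
  have hB : EqOn θB (relaxation 1 cB) (Icc x u) :=
    eqOn_relaxation (hsol.continuousOn_blue.mono hIcc)
      (fun t ht => rhsB_eq_of_gB_pos (hu ht).1 ▸
        (hsol t (ht0 ht)).1.mono (Ici_subset_Ici.2 (ht0 ht))) hBx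
  have hR : EqOn θR (relaxation 0 cR) (Icc x u) :=
    eqOn_relaxation (hsol.continuousOn_red.mono hIcc)
      (fun t ht => rhsR_eq_of_gR_neg (hu ht).2 ▸
        (hsol t (ht0 ht)).2.mono (Ici_subset_Ici.2 (ht0 ht))) hRx
  filter_upwards [Ioo_mem_nhdsGT hxu] with t ht
  rw [hB (Ioo_subset_Icc_self ht), hR (Ioo_subset_Icc_self ht)]

lemma eqOn_relaxation (hsol : IsWSSolutionOn α β p r θB θR (Ici 0)) {cB cR : ℝ}
    (hpath : ∀ t ∈ Ici (0 : ℝ), 0 < gB α β p r (relaxation 1 cB t) (relaxation 0 cR t) ∧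
      gR α β p r (relaxation 1 cB t) (relaxation 0 cR t) < 0)
    (h0B : θB 0 = cB) (h0R : θR 0 = cR) :
    EqOn (fun t => (θB t, θR t)) (fun t => (relaxation 1 cB t, relaxation 0 cR t)) (Ici 0) := by
  intro b hb
  set s := {t | (θB t, θR t) = (relaxation 1 cB t, relaxation 0 cR t)}
  have hclosed : IsClosed (s ∩ Icc 0 b) := by
    have hcont : ContinuousOn (fun t => ((θB t, θR t), (relaxation 1 cB t, relaxation 0 cR t)))
        (Icc 0 b) :=
      ((hsol.continuousOn_blue.prodMk hsol.continuousOn_red).prodMk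
        ((continuous_relaxation 1 cB).prodMk (continuous_relaxation 0 cR)).continuousOn).mono
        Icc_subset_Ici_self
    rw [inter_comm]
    exact hcont.preimage_isClosed_of_isClosed isClosed_Icc isClosed_diagonal
  have hstep : ∀ x ∈ s ∩ Ico 0 b, s ∈ 𝓝[>] x := by
    rintro x ⟨hx, hx0, -⟩
    obtain ⟨hBx, hRx⟩ := Prod.mk.inj hx
    obtain ⟨hgB, hgR⟩ := hpath x hx0
    rw [← hBx, ← hRx] at hgB hgR
    exact hsol.eventually_eq_relaxation hx0 hgB hgR hBx hRx
  have h0 : (0 : ℝ) ∈ s := by simp [s, h0B, h0R]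
  exact hclosed.Icc_subset_of_forall_mem_nhdsWithin h0 hstep ⟨hb, le_rfl⟩

end IsWSSolutionOn

end Solution

theorem ws_case2_polarization_low_general
    (α β p r : ℝ)
    (hα : α ∈ Set.Icc (0:ℝ) 1) (hβ : β ∈ Set.Icc (0:ℝ) 1)
    (hp : p ∈ Set.Icc (0:ℝ) 1) (hr : r ∈ Set.Ioo (0:ℝ) 1)
    (hcase1 : α < p * (α + β) * r) (hcase2 : p * (α + β) * (1 - r) < α)
    (c : ℝ) (hc2 : c < 1 / 2)
    (θB θR : ℝ → ℝ)
    (hsol : IsWSSolutionOn α β p r θB θR (Set.Ici 0))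
    (h0B : θB 0 = c) (h0R : θR 0 = c) :
    Filter.Tendsto (fun t => (θB t, θR t)) Filter.atTop (nhds (((1:ℝ), (0:ℝ)))) := by
  have hpr : p * r ≤ 1 := mul_le_one₀ hp.2 hr.1.le hr.2.le
  have hpath (t : ℝ) (ht : t ∈ Ici (0 : ℝ)) :
      0 < gB α β p r (relaxation 1 c t) (relaxation 0 c t) ∧
        gR α β p r (relaxation 1 c t) (relaxation 0 c t) < 0 := by
    have hle := relaxation_zero_le_relaxation_one c ht
    have hlt := relaxation_zero_lt_half c hc2 ht
    exact ⟨gB_pos_of_le_of_lt_half hα.1 hpr hcase1 hle hlt,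
      gR_neg_of_le_of_lt_half hβ.1 hp.1 hr.2.le hcase2 hle hlt⟩
  have hEq := hsol.eqOn_relaxation hpath h0B h0R
  exact ((tendsto_relaxation 1 c).prodMk_nhds (tendsto_relaxation 0 c)).congr'
    (hEq.symm.eventuallyEq_of_mem (Ici_mem_atTop 0))

/-- Under the Case-2 condition p(α+β)r > α and p(α+β)(1−r) < α, with θ^B(0)=θ^R(0)=c and 0 ≤ c < 1/2, every solution on [0,∞) converges to the party-line polarized state (1,0). -/
theorem ws_case2_polarization_low
    (α β p r : ℝ)
    (hα : α ∈ Set.Icc (0:ℝ) 1) (hβ : β ∈ Set.Icc (0:ℝ) 1)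
    (hp : p ∈ Set.Icc (0:ℝ) 1) (hr : r ∈ Set.Ioo (0:ℝ) 1)
    (hcase1 : α < p * (α + β) * r) (hcase2 : p * (α + β) * (1 - r) < α)
    (c : ℝ) (hc1 : 0 ≤ c) (hc2 : c < 1 / 2)
    (θB θR : ℝ → ℝ)
    (hsol : IsWSSolutionOn α β p r θB θR (Set.Ici 0))
    (h0B : θB 0 = c) (h0R : θR 0 = c) :
    Filter.Tendsto (fun t => (θB t, θR t)) Filter.atTop (nhds (((1:ℝ), (0:ℝ)))) :=
  ws_case2_polarization_low_general α β p r hα hβ hp hr hcase1 hcase2 c hc2 θB θR hsol h0B h0R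
end
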